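/- arXiv:2603.25279 — 4 statements merged into one kernel-verified Lean document; each statement's English description precedes it below -/
import Mathlib

section
/- Let f : [t₀, t₁] → ℝ be twice continuously differentiable with k = t₁ - t₀ > 0. Then the backward-difference consistency error satisfies |f(t₁) - f(t₀) - k f'(t₁)| ≤ (k^{3/2}/√3) (∫_{t₀}^{t₁} f''(t)² dt)^{1/2}. -/
open MeasureTheory intervalIntegral Set

theorem stmt2 (f : ℝ → ℝ) (t₀ t₁ : ℝ) (hf : ContDiff ℝ 2 f)
    (k : ℝ) (hk : k = t₁ - t₀) (hkpos : 0 < k) :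
    |f t₁ - f t₀ - k * deriv f t₁| ≤
      k ^ ((3:ℝ)/2) / Real.sqrt 3 *
        (∫ t in t₀..t₁, (deriv (deriv f) t) ^ 2) ^ ((1:ℝ)/2) := by
  have ht : t₀ ≤ t₁ := by linarith
  set g := deriv f with hgdef
  set g2 := deriv (deriv f) with hg2def
  rw [show (2 : WithTop ℕ∞) = 1 + 1 from rfl] at hf
  have h1 := contDiff_succ_iff_deriv.mp hf
  have hfd : Differentiable ℝ f := h1.1
  have h2 := contDiff_one_iff_deriv.mp h1.2.2
  have hgd : Differentiable ℝ g := h2.1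
  have hg2c : Continuous g2 := h2.2
  have hgc : Continuous g := hgd.continuous
  -- Step A: f t₁ - f t₀ = ∫ g
  have hA : ∫ t in t₀..t₁, g t = f t₁ - f t₀ :=
    intervalIntegral.integral_deriv_eq_sub (fun t _ => hfd t)
      (hgc.intervalIntegrable _ _)
  -- Step B: integration by parts
  have hF : ∀ t : ℝ, HasDerivAt (fun t => (t - t₀) * (g t - g t₁))
      ((g t - g t₁) + (t - t₀) * g2 t) t := by
    intro t
    have h1 : HasDerivAt (fun t : ℝ => t - t₀) 1 t := (hasDerivAt_id t).sub_const t₀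
    have h2 : HasDerivAt (fun t => g t - g t₁) (g2 t) t :=
      ((hgd t).hasDerivAt).sub_const (g t₁)
    have := h1.mul h2
    rw [one_mul] at this
    exact this
  have hBint : ∫ t in t₀..t₁, ((g t - g t₁) + (t - t₀) * g2 t) = 0 := by
    rw [intervalIntegral.integral_eq_sub_of_hasDerivAt (fun t _ => hF t)
      (Continuous.intervalIntegrable (by continuity) _ _)]
    ring
  have hsplit : (∫ t in t₀..t₁, (g t - g t₁)) + ∫ t in t₀..t₁, (t - t₀) * g2 t = 0 := by
    rw [← intervalIntegral.integral_add (f := fun t => g t - g t₁)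
      ((hgc.sub continuous_const).intervalIntegrable _ _)
      (Continuous.intervalIntegrable (by continuity) _ _)]
    exact hBint
  have hgsub : ∫ t in t₀..t₁, (g t - g t₁) = f t₁ - f t₀ - k * g t₁ := by
    rw [intervalIntegral.integral_sub (hgc.intervalIntegrable _ _)
      (intervalIntegrable_const), hA, intervalIntegral.integral_const, hk,
      smul_eq_mul]
  have key : f t₁ - f t₀ - k * g t₁ = -∫ t in t₀..t₁, (t - t₀) * g2 t := by
    linarith [hsplit, hgsub]
  rw [key, abs_neg]
  -- Cauchy-Schwarz
  set μ := volume.restrict (Set.Ioc t₀ t₁) with hμ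
  haveI : IsFiniteMeasure μ := ⟨by
    rw [hμ, Measure.restrict_apply_univ]; exact measure_Ioc_lt_top⟩
  have hpq : Real.HolderConjugate 2 2 := Real.holderConjugate_iff.mpr ⟨one_lt_two, by norm_num⟩
  have hφm : MemLp (fun t : ℝ => t - t₀) (ENNReal.ofReal 2) μ := by
    refine MemLp.of_bound ((continuous_id.sub continuous_const).aestronglyMeasurable) k ?_
    rw [hμ]
    refine (ae_restrict_iff' measurableSet_Ioc).2 (Filter.Eventually.of_forall fun x hx => ?_)
    rw [Real.norm_eq_abs, abs_of_nonneg (by linarith [hx.1])]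
    linarith [hx.2]
  obtain ⟨C, hC⟩ := (isCompact_Icc (a := t₀) (b := t₁)).exists_bound_of_continuousOn
    hg2c.continuousOn
  have hψm : MemLp g2 (ENNReal.ofReal 2) μ := by
    refine MemLp.of_bound hg2c.aestronglyMeasurable C ?_
    rw [hμ]
    exact (ae_restrict_iff' measurableSet_Ioc).2 (Filter.Eventually.of_forall fun x hx =>
      hC x (Set.Ioc_subset_Icc_self hx))
  have hCS := MeasureTheory.integral_mul_norm_le_Lp_mul_Lq hpq hφm hψm
  -- rewrite the interval integral as an integral over μ
  have hiv : ∫ t in t₀..t₁, (t - t₀) * g2 t = ∫ t, (t - t₀) * g2 t ∂μ :=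
    intervalIntegral.integral_of_le ht
  have step1 : |∫ t in t₀..t₁, (t - t₀) * g2 t| ≤ ∫ t, ‖t - t₀‖ * ‖g2 t‖ ∂μ := by
    rw [hiv]
    calc |∫ t, (t - t₀) * g2 t ∂μ| ≤ ∫ t, ‖(t - t₀) * g2 t‖ ∂μ := by
          rw [← Real.norm_eq_abs]
          exact norm_integral_le_integral_norm _
      _ = ∫ t, ‖t - t₀‖ * ‖g2 t‖ ∂μ := by
          simp [norm_mul]
  have eq1 : ∫ t, ‖t - t₀‖ ^ (2:ℝ) ∂μ = k ^ 3 / 3 := by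
    have : ∫ t, ‖t - t₀‖ ^ (2:ℝ) ∂μ = ∫ t in t₀..t₁, (t - t₀) ^ 2 := by
      rw [intervalIntegral.integral_of_le ht]
      refine integral_congr_ae (Filter.Eventually.of_forall fun x => ?_)
      simp [Real.rpow_two, Real.norm_eq_abs, sq_abs]
    rw [this, intervalIntegral.integral_comp_sub_right (fun u : ℝ => u ^ 2) t₀,
      integral_pow, hk]
    norm_num
  have eq2 : ∫ t, ‖g2 t‖ ^ (2:ℝ) ∂μ = ∫ t in t₀..t₁, g2 t ^ 2 := by
    rw [intervalIntegral.integral_of_le ht]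
    refine integral_congr_ae (Filter.Eventually.of_forall fun x => ?_)
    simp [Real.rpow_two, Real.norm_eq_abs, sq_abs]
  have hk32 : ((k ^ 3 / 3 : ℝ)) ^ ((1:ℝ)/2) = k ^ ((3:ℝ)/2) / Real.sqrt 3 := by
    rw [Real.div_rpow (by positivity) (by norm_num), ← Real.rpow_natCast k 3,
      ← Real.rpow_mul hkpos.le]
    norm_num [Real.sqrt_eq_rpow]
  calc |∫ t in t₀..t₁, (t - t₀) * g2 t| ≤ ∫ t, ‖t - t₀‖ * ‖g2 t‖ ∂μ := step1
    _ ≤ (∫ t, ‖t - t₀‖ ^ (2:ℝ) ∂μ) ^ ((1:ℝ)/2) * (∫ t, ‖g2 t‖ ^ (2:ℝ) ∂μ) ^ ((1:ℝ)/2) := by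
        simpa using hCS
    _ = k ^ ((3:ℝ)/2) / Real.sqrt 3 * (∫ t in t₀..t₁, g2 t ^ 2) ^ ((1:ℝ)/2) := by
        rw [eq1, eq2, hk32]
end

section
/- Let p, q : [0,1] → ℝ be polynomials of degree at most r that agree at the endpoint in the sense that all jumps J_j := p^{(j)}(1) - q^{(j)}(1) are defined. Then ∫₀¹ p(x)² dx ≤ C (∫₀¹ q(x)² dx + Σ_{j=1}^r (1/(j!)²) J_j² + J_0²) for a constant C depending only on r. -/
open Polynomial Finset MeasureTheory

noncomputable def auxP (r : ℕ) (c : Fin (r+1) → ℝ) : Polynomial ℝ :=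
  ∑ i : Fin (r+1), Polynomial.monomial (i : ℕ) (c i)

lemma auxP_natDegree (r : ℕ) (c : Fin (r+1) → ℝ) : (auxP r c).natDegree ≤ r := by
  refine Polynomial.natDegree_sum_le_of_forall_le _ _ fun i _ => ?_
  exact (Polynomial.natDegree_monomial_le _).trans (Nat.lt_succ_iff.mp i.isLt)

lemma auxP_coeff (r : ℕ) (c : Fin (r+1) → ℝ) (i : Fin (r+1)) :
    (auxP r c).coeff (i : ℕ) = c i := by
  rw [auxP, Polynomial.finset_sum_coeff, Finset.sum_eq_single i]
  · simp
  · intro j _ hj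
    rw [Polynomial.coeff_monomial, if_neg (fun h => hj (Fin.val_inj.mp h))]
  · simp

lemma auxP_eq (r : ℕ) (p : Polynomial ℝ) (hp : p.natDegree ≤ r) :
    auxP r (fun i => p.coeff (i : ℕ)) = p := by
  conv_rhs => rw [p.as_sum_range' (r+1) (Nat.lt_succ_of_le hp)]
  rw [auxP, Fin.sum_univ_eq_sum_range (fun i => Polynomial.monomial i (p.coeff i))]

lemma auxP_eval (r : ℕ) (c : Fin (r+1) → ℝ) (x : ℝ) :
    (auxP r c).eval x = ∑ i : Fin (r+1), c i * x ^ (i : ℕ) := by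
  simp [auxP, Polynomial.eval_finset_sum]

noncomputable def auxW (r : ℕ) (i j : Fin (r+1)) : ℝ := ((i : ℕ) + (j : ℕ) + 1 : ℝ)⁻¹

lemma auxP_integral (r : ℕ) (c : Fin (r+1) → ℝ) :
    (∫ x in (0:ℝ)..1, (auxP r c).eval x ^ 2)
      = ∑ i : Fin (r+1), ∑ j : Fin (r+1), c i * c j * auxW r i j := by
  have h1 : ∀ x : ℝ, (auxP r c).eval x ^ 2
      = ∑ i : Fin (r+1), ∑ j : Fin (r+1), (c i * c j) * x ^ ((i:ℕ) + (j:ℕ)) := by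
    intro x
    rw [sq, auxP_eval, Finset.sum_mul_sum]
    exact Finset.sum_congr rfl fun i _ => Finset.sum_congr rfl fun j _ => by
      rw [pow_add]; ring
  rw [intervalIntegral.integral_congr (g := fun x => ∑ i : Fin (r+1), ∑ j : Fin (r+1),
    (c i * c j) * x ^ ((i:ℕ)+(j:ℕ))) (fun x _ => h1 x)]
  rw [intervalIntegral.integral_finset_sum (fun i _ =>
    Continuous.intervalIntegrable (by fun_prop) _ _)]
  refine Finset.sum_congr rfl fun i _ => ?_
  rw [intervalIntegral.integral_finset_sum (fun j _ =>
    Continuous.intervalIntegrable (by fun_prop) _ _)]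
  refine Finset.sum_congr rfl fun j _ => ?_
  rw [intervalIntegral.integral_const_mul, integral_pow]
  rw [auxW]
  push_cast
  rw [one_pow, zero_pow (by positivity)]
  ring

noncomputable def auxK (j : ℕ) (i : ℕ) : ℝ :=
  ((Polynomial.derivative (R := ℝ))^[j] (Polynomial.X ^ i)).eval 1

lemma auxP_deriv_eval (r : ℕ) (c : Fin (r+1) → ℝ) (j : ℕ) :
    (((Polynomial.derivative (R := ℝ))^[j] (auxP r c)).eval 1)
      = ∑ i : Fin (r+1), c i * auxK j (i : ℕ) := by
  rw [auxP, Polynomial.iterate_derivative_sum, Polynomial.eval_finset_sum]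
  refine Finset.sum_congr rfl fun i _ => ?_
  rw [← Polynomial.C_mul_X_pow_eq_monomial, Polynomial.iterate_derivative_C_mul,
    Polynomial.eval_mul, Polynomial.eval_C, auxK]

lemma poly_zero_of_integral (q : Polynomial ℝ)
    (h : (∫ x in (0:ℝ)..1, q.eval x ^ 2) = 0) : q = 0 := by
  by_contra hq
  have hcont : Continuous fun x : ℝ => q.eval x ^ 2 := by fun_prop
  have h0 := (intervalIntegral.integral_eq_zero_iff_of_le_of_nonneg_ae zero_le_one
    (Filter.Eventually.of_forall fun x => sq_nonneg _) (hcont.intervalIntegrable _ _)).1 h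
  have hS : MeasurableSet {x : ℝ | q.eval x ^ 2 ≠ 0} :=
    (isOpen_ne_fun hcont continuous_const).measurableSet
  have h1 : volume ({x : ℝ | q.eval x ^ 2 ≠ 0} ∩ Set.Ioc (0:ℝ) 1) = 0 := by
    have h2 : (volume.restrict (Set.Ioc (0:ℝ) 1)) {x : ℝ | q.eval x ^ 2 ≠ 0} = 0 := by
      have := MeasureTheory.ae_iff.mp h0
      simpa using this
    rwa [MeasureTheory.Measure.restrict_apply hS] at h2
  have hroots : volume {x : ℝ | q.IsRoot x} = 0 :=
    (Polynomial.finite_setOf_isRoot hq).measure_zero _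
  have hsub : Set.Ioc (0:ℝ) 1 ⊆
      ({x : ℝ | q.eval x ^ 2 ≠ 0} ∩ Set.Ioc (0:ℝ) 1) ∪ {x : ℝ | q.IsRoot x} := by
    intro x hx
    by_cases hqx : q.eval x = 0
    · exact Or.inr hqx
    · exact Or.inl ⟨by simp [hqx], hx⟩
  have hz : volume (Set.Ioc (0:ℝ) 1) = 0 :=
    measure_mono_null hsub (measure_union_null h1 hroots)
  simp [Real.volume_Ioc] at hz

lemma poly_zero_of_derivs (r : ℕ) (p : Polynomial ℝ) (hp : p.natDegree ≤ r)
    (h : ∀ j ≤ r, (((Polynomial.derivative (R := ℝ))^[j] p).eval 1) = 0) : p = 0 := by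
  have ht : Polynomial.taylor (1:ℝ) p = 0 := by
    ext j
    rcases le_or_gt j r with hj | hj
    · rw [Polynomial.taylor_coeff, Polynomial.coeff_zero]
      have h2 : ((Polynomial.derivative (R := ℝ))^[j] p).eval 1 = 0 := h j hj
      have h3 : (Nat.factorial j) • Polynomial.hasseDeriv j p
          = (Polynomial.derivative (R := ℝ))^[j] p := by
        have := congrFun (Polynomial.factorial_smul_hasseDeriv (R := ℝ) j) p
        simpa using this
      rw [← h3, nsmul_eq_mul, Polynomial.eval_mul, Polynomial.eval_natCast,
        mul_eq_zero] at h2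
      rcases h2 with h2 | h2
      · exact absurd h2 (Nat.cast_ne_zero.mpr (Nat.factorial_ne_zero j))
      · exact h2
    · rw [Polynomial.coeff_zero]
      exact Polynomial.coeff_eq_zero_of_natDegree_lt
        (by rw [Polynomial.natDegree_taylor]; exact lt_of_le_of_lt hp hj)
  have h4 := congrArg (Polynomial.taylor (-1:ℝ)) ht
  rwa [Polynomial.taylor_taylor, neg_add_cancel, Polynomial.taylor_zero, map_zero] at h4

noncomputable def auxJ (r j : ℕ) (v : (Fin (r+1) → ℝ) × (Fin (r+1) → ℝ)) : ℝ :=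
  ∑ i : Fin (r+1), (v.1 i - v.2 i) * auxK j (i : ℕ)

noncomputable def auxG (r : ℕ) (v : (Fin (r+1) → ℝ) × (Fin (r+1) → ℝ)) : ℝ :=
  ∑ i : Fin (r+1), ∑ j : Fin (r+1), v.1 i * v.1 j * auxW r i j

noncomputable def auxA (r : ℕ) (v : (Fin (r+1) → ℝ) × (Fin (r+1) → ℝ)) : ℝ :=
  ∑ i : Fin (r+1), ∑ j : Fin (r+1), v.2 i * v.2 j * auxW r i j

noncomputable def auxF (r : ℕ) (v : (Fin (r+1) → ℝ) × (Fin (r+1) → ℝ)) : ℝ :=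
  auxA r v + (∑ j ∈ Finset.Icc 1 r, (1 / (Nat.factorial j : ℝ)^2) * (auxJ r j v)^2)
    + (auxJ r 0 v)^2

lemma auxG_eq (r : ℕ) (v : (Fin (r+1) → ℝ) × (Fin (r+1) → ℝ)) :
    auxG r v = ∫ x in (0:ℝ)..1, (auxP r v.1).eval x ^ 2 := (auxP_integral r v.1).symm

lemma auxA_eq (r : ℕ) (v : (Fin (r+1) → ℝ) × (Fin (r+1) → ℝ)) :
    auxA r v = ∫ x in (0:ℝ)..1, (auxP r v.2).eval x ^ 2 := (auxP_integral r v.2).symm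

lemma auxJ_eq (r j : ℕ) (v : (Fin (r+1) → ℝ) × (Fin (r+1) → ℝ)) :
    auxJ r j v = (((Polynomial.derivative (R := ℝ))^[j] (auxP r v.1)).eval 1)
      - (((Polynomial.derivative (R := ℝ))^[j] (auxP r v.2)).eval 1) := by
  rw [auxP_deriv_eval, auxP_deriv_eval, ← Finset.sum_sub_distrib, auxJ]
  exact Finset.sum_congr rfl fun i _ => by ring

lemma auxJ_eq' (r j : ℕ) (v : (Fin (r+1) → ℝ) × (Fin (r+1) → ℝ)) :
    auxJ r j v = (((Polynomial.derivative (R := ℝ))^[j] (auxP r (v.1 - v.2))).eval 1) := by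
  rw [auxP_deriv_eval, auxJ]
  exact Finset.sum_congr rfl fun i _ => by simp

lemma auxG_smul (r : ℕ) (t : ℝ) (v : (Fin (r+1) → ℝ) × (Fin (r+1) → ℝ)) :
    auxG r (t • v) = t^2 * auxG r v := by
  rw [auxG, auxG, Finset.mul_sum]
  refine Finset.sum_congr rfl fun i _ => ?_
  rw [Finset.mul_sum]
  refine Finset.sum_congr rfl fun j _ => ?_
  simp only [Prod.smul_fst, Pi.smul_apply, smul_eq_mul]
  ring

lemma auxA_smul (r : ℕ) (t : ℝ) (v : (Fin (r+1) → ℝ) × (Fin (r+1) → ℝ)) :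
    auxA r (t • v) = t^2 * auxA r v := by
  rw [auxA, auxA, Finset.mul_sum]
  refine Finset.sum_congr rfl fun i _ => ?_
  rw [Finset.mul_sum]
  refine Finset.sum_congr rfl fun j _ => ?_
  simp only [Prod.smul_snd, Pi.smul_apply, smul_eq_mul]
  ring

lemma auxJ_smul (r j : ℕ) (t : ℝ) (v : (Fin (r+1) → ℝ) × (Fin (r+1) → ℝ)) :
    auxJ r j (t • v) = t * auxJ r j v := by
  rw [auxJ, auxJ, Finset.mul_sum]
  refine Finset.sum_congr rfl fun i _ => ?_
  simp only [Prod.smul_fst, Prod.smul_snd, Pi.smul_apply, smul_eq_mul]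
  ring

lemma auxF_smul (r : ℕ) (t : ℝ) (v : (Fin (r+1) → ℝ) × (Fin (r+1) → ℝ)) :
    auxF r (t • v) = t^2 * auxF r v := by
  rw [auxF, auxF, auxA_smul, auxJ_smul, mul_add, mul_add]
  congr 1
  · congr 1
    rw [Finset.mul_sum]
    refine Finset.sum_congr rfl fun j _ => ?_
    rw [auxJ_smul]
    ring
  · ring

lemma auxG_cont (r : ℕ) : Continuous (auxG r) := by
  unfold auxG
  fun_prop

lemma auxF_cont (r : ℕ) : Continuous (auxF r) := by
  unfold auxF auxA auxJ
  fun_prop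

lemma auxG_nonneg (r : ℕ) (v : (Fin (r+1) → ℝ) × (Fin (r+1) → ℝ)) : 0 ≤ auxG r v := by
  rw [auxG_eq]
  exact intervalIntegral.integral_nonneg zero_le_one (fun x _ => sq_nonneg _)

lemma auxA_nonneg (r : ℕ) (v : (Fin (r+1) → ℝ) × (Fin (r+1) → ℝ)) : 0 ≤ auxA r v := by
  rw [auxA_eq]
  exact intervalIntegral.integral_nonneg zero_le_one (fun x _ => sq_nonneg _)

lemma auxF_pos (r : ℕ) (v : (Fin (r+1) → ℝ) × (Fin (r+1) → ℝ)) (hv : v ≠ 0) :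
    0 < auxF r v := by
  have hA := auxA_nonneg r v
  have hB : 0 ≤ ∑ j ∈ Finset.Icc 1 r, (1 / (Nat.factorial j : ℝ)^2) * (auxJ r j v)^2 :=
    Finset.sum_nonneg fun j _ => by positivity
  have hD : 0 ≤ (auxJ r 0 v)^2 := sq_nonneg _
  rcases lt_or_eq_of_le (by rw [auxF]; positivity : (0:ℝ) ≤ auxF r v) with h | h
  · exact h
  exfalso
  rw [auxF] at h
  have hA0 : auxA r v = 0 := by linarith
  have hB0 : ∑ j ∈ Finset.Icc 1 r, (1 / (Nat.factorial j : ℝ)^2) * (auxJ r j v)^2 = 0 := by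
    linarith
  have hD0 : auxJ r 0 v = 0 := by
    have : (auxJ r 0 v)^2 = 0 := by linarith
    exact pow_eq_zero_iff (by norm_num) |>.mp this
  have hJ0 : ∀ j ∈ Finset.Icc 1 r, auxJ r j v = 0 := by
    intro j hj
    have hterm := (Finset.sum_eq_zero_iff_of_nonneg
      (fun j _ => by positivity)).mp hB0 j hj
    have hstrict : (0:ℝ) < 1 / (Nat.factorial j : ℝ)^2 := by positivity
    rcases mul_eq_zero.mp hterm with h' | h'
    · linarith
    · exact pow_eq_zero_iff (by norm_num) |>.mp h'
  -- v.2 = 0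
  have hq0 : auxP r v.2 = 0 := poly_zero_of_integral _ ((auxA_eq r v) ▸ hA0)
  have hv2 : v.2 = 0 := by
    funext i
    have := auxP_coeff r v.2 i
    rw [hq0] at this
    simpa using this.symm
  -- all jumps vanish for j = 0..r
  have hdiff : auxP r (v.1 - v.2) = 0 := by
    refine poly_zero_of_derivs r _ (auxP_natDegree r _) fun j hj => ?_
    rw [← auxJ_eq']
    rcases Nat.eq_zero_or_pos j with h0 | hpos
    · rw [h0]; exact hD0
    · exact hJ0 j (Finset.mem_Icc.mpr ⟨hpos, hj⟩)
  have hv1 : v.1 - v.2 = 0 := by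
    funext i
    have := auxP_coeff r (v.1 - v.2) i
    rw [hdiff] at this
    simpa using this.symm
  apply hv
  have : v.1 = v.2 := sub_eq_zero.mp hv1
  rw [Prod.ext_iff]
  exact ⟨by rw [this, hv2]; rfl, by rw [hv2]; rfl⟩

theorem stmt9 (r : ℕ) :
    ∃ C : ℝ, 0 < C ∧ ∀ p q : Polynomial ℝ, p.natDegree ≤ r → q.natDegree ≤ r →
      (∫ x in (0:ℝ)..1, (p.eval x)^2) ≤
        C * ((∫ x in (0:ℝ)..1, (q.eval x)^2) +
          (∑ j ∈ Finset.Icc 1 r, (1 / (Nat.factorial j : ℝ)^2) *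
            (((Polynomial.derivative (R := ℝ))^[j] p).eval 1 -
             ((Polynomial.derivative (R := ℝ))^[j] q).eval 1)^2) +
          (p.eval 1 - q.eval 1)^2) := by
  obtain ⟨vm, hvm, hmin⟩ := (isCompact_sphere (0 : (Fin (r+1) → ℝ) × (Fin (r+1) → ℝ))
    1).exists_isMinOn (NormedSpace.sphere_nonempty.mpr zero_le_one) (auxF_cont r).continuousOn
  obtain ⟨vM, hvM, hmax⟩ := (isCompact_sphere (0 : (Fin (r+1) → ℝ) × (Fin (r+1) → ℝ))
    1).exists_isMaxOn (NormedSpace.sphere_nonempty.mpr zero_le_one) (auxG_cont r).continuousOn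
  set m := auxF r vm with hm_def
  set M := auxG r vM with hM_def
  have hm : 0 < m := auxF_pos r vm (Metric.ne_of_mem_sphere hvm one_ne_zero)
  have hM : 0 ≤ M := auxG_nonneg r vM
  refine ⟨(M + 1) / m, by positivity, fun p q hp hq => ?_⟩
  set v : (Fin (r+1) → ℝ) × (Fin (r+1) → ℝ) :=
    (fun i => p.coeff (i : ℕ), fun i => q.coeff (i : ℕ)) with hv_def
  have hPv1 : auxP r v.1 = p := auxP_eq r p hp
  have hPv2 : auxP r v.2 = q := auxP_eq r q hq
  have key : auxG r v ≤ (M + 1) / m * auxF r v := by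
    by_cases hv0 : v = 0
    · rw [hv0]
      have hG0 : auxG r (0 : (Fin (r+1) → ℝ) × (Fin (r+1) → ℝ)) = 0 := by
        simp [auxG]
      have hF0 : auxF r (0 : (Fin (r+1) → ℝ) × (Fin (r+1) → ℝ)) = 0 := by
        simp [auxF, auxA, auxJ]
      rw [hG0, hF0, mul_zero]
    · set t := ‖v‖ with ht_def
      have ht : 0 < t := norm_pos_iff.mpr hv0
      set u := t⁻¹ • v with hu_def
      have hu : u ∈ Metric.sphere (0 : (Fin (r+1) → ℝ) × (Fin (r+1) → ℝ)) 1 := by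
        rw [mem_sphere_zero_iff_norm, hu_def, norm_smul, norm_inv, norm_norm, ← ht_def]
        exact inv_mul_cancel₀ ht.ne'
      have hvu : v = t • u := by
        rw [hu_def, smul_inv_smul₀ ht.ne']
      have h1 : auxG r v = t^2 * auxG r u := by rw [hvu, auxG_smul]
      have h2 : auxF r v = t^2 * auxF r u := by rw [hvu, auxF_smul]
      have h3 : auxG r u ≤ M := hmax hu
      have h4 : m ≤ auxF r u := hmin hu
      rw [h1, h2]
      have ht2 : (0:ℝ) < t^2 := by positivity
      rw [div_mul_eq_mul_div, le_div_iff₀ hm]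
      nlinarith [mul_le_mul_of_nonneg_left h3 (mul_nonneg ht2.le hm.le),
        mul_le_mul_of_nonneg_left h4 (mul_nonneg ht2.le (by linarith : (0:ℝ) ≤ M + 1)),
        auxG_nonneg r u, mul_nonneg ht2.le hm.le]
  have hGv : (∫ x in (0:ℝ)..1, (p.eval x)^2) = auxG r v := by
    rw [auxG_eq, hPv1]
  have hAv : (∫ x in (0:ℝ)..1, (q.eval x)^2) = auxA r v := by
    rw [auxA_eq, hPv2]
  have hJv : ∀ j : ℕ, (((Polynomial.derivative (R := ℝ))^[j] p).eval 1
      - ((Polynomial.derivative (R := ℝ))^[j] q).eval 1) = auxJ r j v := by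
    intro j
    rw [auxJ_eq, hPv1, hPv2]
  have hJ0v : p.eval 1 - q.eval 1 = auxJ r 0 v := by
    have := hJv 0
    simpa using this
  calc (∫ x in (0:ℝ)..1, (p.eval x)^2) = auxG r v := hGv
    _ ≤ (M + 1) / m * auxF r v := key
    _ = (M + 1) / m * ((∫ x in (0:ℝ)..1, (q.eval x)^2) +
          (∑ j ∈ Finset.Icc 1 r, (1 / (Nat.factorial j : ℝ)^2) *
            (((Polynomial.derivative (R := ℝ))^[j] p).eval 1 -
             ((Polynomial.derivative (R := ℝ))^[j] q).eval 1)^2) +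
          (p.eval 1 - q.eval 1)^2) := by
        have hS : (∑ j ∈ Finset.Icc 1 r, (1 / (Nat.factorial j : ℝ)^2) * (auxJ r j v)^2)
            = ∑ j ∈ Finset.Icc 1 r, (1 / (Nat.factorial j : ℝ)^2) *
              (((Polynomial.derivative (R := ℝ))^[j] p).eval 1 -
               ((Polynomial.derivative (R := ℝ))^[j] q).eval 1)^2 :=
          Finset.sum_congr rfl fun j _ => by rw [hJv j]
        rw [auxF, hAv, hJ0v, hS]
end

section
/- Let f : [0,T] → ℝ be C², let N ∈ ℕ, k = T/N, t_n = nk. Then Σ_{n=1}^N k |(f(t_n) - f(t_{n-1}))/k - f'(t_n)|² ≤ (k²/3) ∫₀^T f''(t)² dt. -/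
open MeasureTheory intervalIntegral

/-- Cauchy–Schwarz for interval integrals of continuous functions. -/
lemma cs_interval {a b : ℝ} (hab : a ≤ b) {g h : ℝ → ℝ} (hg : Continuous g)
    (hh : Continuous h) :
    (∫ s in a..b, g s * h s) ^ 2 ≤ (∫ s in a..b, g s ^ 2) * ∫ s in a..b, h s ^ 2 := by
  set μ := volume.restrict (Set.Ioc a b) with hμ
  haveI : IsFiniteMeasure μ := by
    constructor
    rw [hμ, Measure.restrict_apply_univ, Real.volume_Ioc]
    exact ENNReal.ofReal_lt_top
  have hmem : ∀ (φ : ℝ → ℝ), Continuous φ → MemLp (fun x => |φ x|) (ENNReal.ofReal 2) μ := by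
    intro φ hφ
    obtain ⟨C, hC⟩ : ∃ C, ∀ x ∈ Set.Icc a b, ‖φ x‖ ≤ C :=
      isCompact_Icc.exists_bound_of_continuousOn hφ.continuousOn
    refine (memLp_top_of_bound (hφ.abs.aestronglyMeasurable) C ?_).mono_exponent le_top
    rw [hμ]
    filter_upwards [ae_restrict_mem measurableSet_Ioc] with x hx
    simpa [abs_abs] using hC x (Set.Ioc_subset_Icc_self hx)
  have h2 : (2 : ℝ).HolderConjugate 2 := Real.HolderConjugate.two_two
  have key : ∫ x, |g x| * |h x| ∂μ ≤
      (∫ x, |g x| ^ (2:ℝ) ∂μ) ^ (1/(2:ℝ)) * (∫ x, |h x| ^ (2:ℝ) ∂μ) ^ (1/(2:ℝ)) :=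
    integral_mul_le_Lp_mul_Lq_of_nonneg h2
      (Filter.Eventually.of_forall fun x => abs_nonneg _)
      (Filter.Eventually.of_forall fun x => abs_nonneg _) (hmem g hg) (hmem h hh)
  have hrw : ∀ (φ : ℝ → ℝ), (∫ x, |φ x| ^ (2:ℝ) ∂μ) = ∫ x, φ x ^ 2 ∂μ := by
    intro φ
    refine integral_congr_ae (Filter.Eventually.of_forall fun x => ?_)
    simp only [show ((2:ℝ)) = ((2:ℕ):ℝ) by norm_num, Real.rpow_natCast, sq_abs]
  rw [hrw, hrw] at key
  have hI2 : ∀ (φ : ℝ → ℝ), Continuous φ → (∫ s in a..b, φ s ^ 2) = ∫ x, φ x ^ 2 ∂μ := by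
    intro φ hφ
    rw [intervalIntegral.integral_of_le hab]
  have hg2nn : (0:ℝ) ≤ ∫ x, g x ^ 2 ∂μ := integral_nonneg fun x => sq_nonneg _
  have hh2nn : (0:ℝ) ≤ ∫ x, h x ^ 2 ∂μ := integral_nonneg fun x => sq_nonneg _
  have habs : |∫ s in a..b, g s * h s| ≤ ∫ x, |g x| * |h x| ∂μ := by
    rw [intervalIntegral.integral_of_le hab]
    simpa [Real.norm_eq_abs, abs_mul] using MeasureTheory.norm_integral_le_integral_norm
      (μ := μ) (f := fun x => g x * h x)
  have hnn : (0:ℝ) ≤ ∫ x, |g x| * |h x| ∂μ :=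
    integral_nonneg fun x => mul_nonneg (abs_nonneg _) (abs_nonneg _)
  have hfin : |∫ s in a..b, g s * h s| ≤
      (∫ x, g x ^ 2 ∂μ) ^ (1/(2:ℝ)) * (∫ x, h x ^ 2 ∂μ) ^ (1/(2:ℝ)) := habs.trans key
  rw [hI2 g hg, hI2 h hh]
  calc (∫ s in a..b, g s * h s) ^ 2 = |∫ s in a..b, g s * h s| ^ 2 := (sq_abs _).symm
    _ ≤ ((∫ x, g x ^ 2 ∂μ) ^ (1/(2:ℝ)) * (∫ x, h x ^ 2 ∂μ) ^ (1/(2:ℝ))) ^ 2 :=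
        pow_le_pow_left₀ (abs_nonneg _) hfin 2
    _ = (∫ x, g x ^ 2 ∂μ) * ∫ x, h x ^ 2 ∂μ := by
        rw [mul_pow, ← Real.rpow_natCast ((∫ x, g x ^ 2 ∂μ) ^ (1/(2:ℝ))) 2,
          ← Real.rpow_natCast ((∫ x, h x ^ 2 ∂μ) ^ (1/(2:ℝ))) 2,
          ← Real.rpow_mul hg2nn, ← Real.rpow_mul hh2nn]
        norm_num

/-- Taylor-type identity for the backward difference. -/
lemma step_identity (f : ℝ → ℝ) (hf : ContDiff ℝ 2 f) (a b : ℝ) :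
    f b - f a - (b - a) * deriv f b = -∫ s in a..b, (s - a) * deriv (deriv f) s := by
  have hf1 : ContDiff ℝ 1 (deriv f) := by
    have := (contDiff_succ_iff_deriv (n := 1)).mp (by exact_mod_cast hf)
    exact this.2.2
  have hdf : Differentiable ℝ f := hf.differentiable (by norm_num)
  have hddf : Differentiable ℝ (deriv f) := hf1.differentiable (by norm_num)
  have hcont : Continuous (fun s => (s - a) * deriv (deriv f) s) :=
    (continuous_id.sub continuous_const).mul (hf1.continuous_deriv le_rfl)
  have key : ∫ s in a..b, (s - a) * deriv (deriv f) s
      = ((b - a) * deriv f b - f b) - ((a - a) * deriv f a - f a) := by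
    refine intervalIntegral.integral_eq_sub_of_hasDerivAt
      (f := fun s => (s - a) * deriv f s - f s) (fun s _ => ?_)
      (hcont.intervalIntegrable a b)
    have h1 : HasDerivAt (fun s => (s - a) * deriv f s)
        (1 * deriv f s + (s - a) * deriv (deriv f) s) s :=
      ((hasDerivAt_id s).sub_const a).mul (hddf s).hasDerivAt
    have h2 : HasDerivAt f (deriv f s) s := (hdf s).hasDerivAt
    have := h1.sub h2
    convert this using 1
    · rfl
    · ring
  rw [key]; ring

/-- ∫ (s-a)² over [a,b] equals (b-a)³/3. -/
lemma integral_sq_shift (a b : ℝ) :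
    (∫ s in a..b, (s - a) ^ 2) = (b - a) ^ 3 / 3 := by
  rw [show (fun s => (s - a)^2) = (fun s => (fun u => u^2) (s - a)) from rfl,
    intervalIntegral.integral_comp_sub_right (fun u => u^2) a]
  rw [integral_pow]
  norm_num

theorem stmt12 (T : ℝ) (hT : 0 < T) (N : ℕ) (hN : 1 ≤ N) (f : ℝ → ℝ)
    (hf : ContDiff ℝ 2 f)
    (k : ℝ) (hk : k = T / N) (t : ℕ → ℝ) (ht : ∀ n, t n = n * k) :
    ∑ n ∈ Finset.Icc 1 N, k * |(f (t n) - f (t (n-1))) / k - deriv f (t n)|^2 ≤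
      k^2 / 3 * ∫ s in (0:ℝ)..T, (deriv (deriv f) s)^2 := by
  have hNpos : (0:ℝ) < N := by exact_mod_cast hN
  have hkpos : 0 < k := by rw [hk]; positivity
  set g := deriv (deriv f) with hg
  have hf1 : ContDiff ℝ 1 (deriv f) := by
    have := (contDiff_succ_iff_deriv (n := 1)).mp (by exact_mod_cast hf)
    exact this.2.2
  have hgc : Continuous g := hf1.continuous_deriv le_rfl
  have hstep : ∀ n ∈ Finset.Icc 1 N,
      k * |(f (t n) - f (t (n-1))) / k - deriv f (t n)|^2 ≤
      k^2/3 * ∫ s in (t (n-1))..(t n), g s ^ 2 := by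
    intro n hn
    obtain ⟨hn1, hnN⟩ := Finset.mem_Icc.mp hn
    set a := t (n-1) with ha
    set b := t n with hb
    have hba : b - a = k := by
      rw [ha, hb, ht, ht, Nat.cast_sub hn1]
      push_cast; ring
    have hab : a ≤ b := by linarith [hkpos]
    have hid : f b - f a - k * deriv f b = -∫ s in a..b, (s - a) * g s := by
      have := step_identity f hf a b
      rw [hba] at this; exact this
    have hcs : (∫ s in a..b, (s - a) * g s) ^ 2 ≤
        ((b - a)^3/3) * ∫ s in a..b, g s ^ 2 := by
      have := cs_interval hab (g := fun s => s - a) (h := g)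
        (continuous_id.sub continuous_const) hgc
      rwa [integral_sq_shift a b] at this
    rw [hba] at hcs
    have habs : |(f b - f a) / k - deriv f b|^2
        = (1/k^2) * (∫ s in a..b, (s - a) * g s) ^ 2 := by
      rw [sq_abs]
      have : (f b - f a) / k - deriv f b = (f b - f a - k * deriv f b) / k := by
        field_simp
      rw [this, hid, div_pow]
      ring
    rw [habs]
    rw [← mul_assoc]
    calc k * (1/k^2) * (∫ s in a..b, (s - a) * g s) ^ 2
        ≤ k * (1/k^2) * (k^3/3 * ∫ s in a..b, g s ^ 2) := by
          apply mul_le_mul_of_nonneg_left hcs; positivity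
      _ = k^2/3 * ∫ s in a..b, g s ^ 2 := by field_simp
  calc ∑ n ∈ Finset.Icc 1 N, k * |(f (t n) - f (t (n-1))) / k - deriv f (t n)|^2
      ≤ ∑ n ∈ Finset.Icc 1 N, k^2/3 * ∫ s in (t (n-1))..(t n), g s ^ 2 :=
        Finset.sum_le_sum hstep
    _ = k^2/3 * ∑ n ∈ Finset.Icc 1 N, ∫ s in (t (n-1))..(t n), g s ^ 2 := by
        rw [Finset.mul_sum]
    _ = k^2/3 * ∫ s in (0:ℝ)..T, g s ^ 2 := by
        congr 1
        have hre : ∑ n ∈ Finset.Icc 1 N, (∫ s in (t (n-1))..(t n), g s ^ 2)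
            = ∑ i ∈ Finset.range N, ∫ s in (t i)..(t (i+1)), g s ^ 2 := by
          rw [← Finset.Ico_add_one_right_eq_Icc, Finset.sum_Ico_eq_sum_range]
          have hNN : N + 1 - 1 = N := rfl
          rw [hNN]
          refine Finset.sum_congr rfl fun i _ => ?_
          have h1 : 1 + i - 1 = i := by omega
          rw [h1, Nat.add_comm 1 i]
        rw [hre, intervalIntegral.sum_integral_adjacent_intervals (f := fun s => g s ^ 2)
          (fun i _ => ((hgc.pow 2).intervalIntegrable _ _))]
        have ht0 : t 0 = 0 := by rw [ht]; simp
        have htN : t N = T := by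
          rw [ht, hk]; field_simp
        rw [ht0, htN]
end

section
/- Let q : [0,1]² → ℝ be a polynomial in Q_r (degree ≤ r in each variable), and let F = {1}×[0,1] be the right face. Then ∫_{[0,1]²} q(x,y)² dx dy ≤ C_r (∫₀¹ q(1,y)² dy + Σ_{j=1}^r (1/(j!)²) ∫₀¹ (∂₁^j q)(1,y)² dy) for a constant C_r depending only on r. -/
/-- A tensor-product polynomial of bidegree at most `r` on the plane,
given by its coefficients `c`. -/
noncomputable def Qpoly (r : ℕ) (c : ℕ → ℕ → ℝ) (x y : ℝ) : ℝ :=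
  ∑ i ∈ Finset.range (r+1), ∑ j ∈ Finset.range (r+1), c i j * x^i * y^j

open Polynomial intervalIntegral in
private noncomputable def Pc (r : ℕ) (c : ℕ → ℕ → ℝ) (y : ℝ) : ℝ[X] :=
  ∑ i ∈ Finset.range (r+1), C (∑ j ∈ Finset.range (r+1), c i j * y^j) * X^i

open Polynomial in
private lemma Pc_eval (r : ℕ) (c : ℕ → ℕ → ℝ) (y x : ℝ) :
    (Pc r c y).eval x = Qpoly r c x y := by
  simp only [Pc, Qpoly, eval_finset_sum, eval_mul, eval_C, eval_pow, eval_X, Finset.sum_mul]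
  refine Finset.sum_congr rfl fun i _ => Finset.sum_congr rfl fun j _ => by ring

open Polynomial in
private lemma Pc_natDegree (r : ℕ) (c : ℕ → ℕ → ℝ) (y : ℝ) :
    (Pc r c y).natDegree ≤ r := by
  refine natDegree_sum_le_of_forall_le _ _ fun i hi => ?_
  refine (natDegree_C_mul_le _ _).trans ((natDegree_X_pow_le _).trans ?_)
  exact Nat.lt_succ_iff.mp (Finset.mem_range.mp hi)

open Polynomial in
private lemma iteratedDeriv_polyeval (n : ℕ) (p : ℝ[X]) :
    iteratedDeriv n (fun x => p.eval x) = fun x => (derivative^[n] p).eval x := by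
  induction n generalizing p with
  | zero => simp
  | succ n ih =>
    rw [iteratedDeriv_succ']
    have h : deriv (fun x => p.eval x) = fun x => p.derivative.eval x :=
      funext fun x => Polynomial.deriv p
    rw [h, ih, Function.iterate_succ_apply]

open Polynomial in
private lemma factorial_mul_hasse (j : ℕ) (p : ℝ[X]) :
    (j.factorial : ℝ) * (hasseDeriv j p).eval 1 = (derivative^[j] p).eval 1 := by
  have h := congrFun (factorial_smul_hasseDeriv (R := ℝ) j) p
  simp only [LinearMap.smul_apply, nsmul_eq_mul] at h
  rw [← h]
  simp

open Polynomial in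
/-- Taylor expansion bound: `(p.eval x)^2 ≤ (r+1) * ∑ (p^(j)(1)/j!)^2` for `x ∈ [0,1]`. -/
private lemma taylor_sq_bound (r : ℕ) (p : ℝ[X]) (hp : p.natDegree ≤ r)
    {x : ℝ} (hx0 : 0 ≤ x) (hx1 : x ≤ 1) :
    (p.eval x)^2 ≤ (r+1 : ℝ) *
      ∑ j ∈ Finset.range (r+1),
        ((derivative^[j] p).eval 1 / (j.factorial : ℝ))^2 := by
  have hdeg : (taylor 1 p).natDegree < r + 1 := by
    rw [natDegree_taylor]; omega
  have hev : p.eval x = (taylor 1 p).eval (x - 1) := by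
    rw [taylor_eval]; ring_nf
  rw [hev, eval_eq_sum_range' hdeg]
  calc (∑ i ∈ Finset.range (r+1), (taylor 1 p).coeff i * (x-1)^i)^2
      ≤ ((Finset.range (r+1)).card : ℝ) *
          ∑ i ∈ Finset.range (r+1), ((taylor 1 p).coeff i * (x-1)^i)^2 :=
        sq_sum_le_card_mul_sum_sq
    _ ≤ (r+1 : ℝ) * ∑ j ∈ Finset.range (r+1),
          ((derivative^[j] p).eval 1 / (j.factorial : ℝ))^2 := by
        rw [Finset.card_range]
        push_cast
        refine mul_le_mul_of_nonneg_left (Finset.sum_le_sum fun i _ => ?_) (by positivity)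
        have hcoeff : (taylor 1 p).coeff i = (derivative^[i] p).eval 1 / (i.factorial : ℝ) := by
          rw [taylor_coeff, eq_div_iff (by positivity : (i.factorial : ℝ) ≠ 0), mul_comm]
          exact factorial_mul_hasse i p
        rw [hcoeff, mul_pow]
        have habs : |x - 1| ≤ 1 := by rw [abs_le]; constructor <;> linarith
        have h1 : |(x-1)^i| ≤ 1 := by
          rw [abs_pow]; exact pow_le_one₀ (abs_nonneg _) habs
        have hxa : ((x-1)^i)^2 ≤ 1 := by
          nlinarith [sq_abs ((x-1)^i), abs_nonneg ((x-1)^i)]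
        calc ((derivative^[i] p).eval 1 / (i.factorial : ℝ))^2 * ((x-1)^i)^2
            ≤ ((derivative^[i] p).eval 1 / (i.factorial : ℝ))^2 * 1 :=
              mul_le_mul_of_nonneg_left hxa (sq_nonneg _)
          _ = _ := mul_one _

theorem stmt19 (r : ℕ) :
    ∃ C : ℝ, 0 < C ∧ ∀ c : ℕ → ℕ → ℝ,
      (∫ x in (0:ℝ)..1, ∫ y in (0:ℝ)..1, (Qpoly r c x y)^2) ≤
        C * ((∫ y in (0:ℝ)..1, (Qpoly r c 1 y)^2) +
          ∑ j ∈ Finset.Icc 1 r, (1 / (Nat.factorial j : ℝ)^2) *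
            ∫ y in (0:ℝ)..1, (iteratedDeriv j (fun x => Qpoly r c x y) 1)^2) := by
  refine ⟨(r:ℝ)+1, by positivity, fun c => ?_⟩
  classical
  set g : ℕ → ℝ → ℝ :=
    fun j y => (Polynomial.derivative^[j] (Pc r c y)).eval 1 / (j.factorial : ℝ) with hg
  have hgeq : ∀ j, g j = fun y => ∑ i ∈ Finset.range (r+1),
      (∑ k ∈ Finset.range (r+1), c i k * y^k) *
        ((Polynomial.derivative^[j] ((Polynomial.X : Polynomial ℝ)^i)).eval 1
          / (j.factorial : ℝ)) := by
    intro j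
    funext y
    simp only [hg, Pc, Polynomial.iterate_derivative_sum, Polynomial.iterate_derivative_C_mul,
      Polynomial.eval_finset_sum, Polynomial.eval_mul, Polynomial.eval_C, Finset.sum_div,
      mul_div_assoc]
  have hcont : ∀ j, Continuous (g j) := by
    intro j
    rw [hgeq j]
    exact continuous_finset_sum _ fun i _ =>
      ((continuous_finset_sum _ fun k _ => by fun_prop).mul continuous_const)
  have hQy : ∀ x : ℝ, Continuous fun y => Qpoly r c x y := by
    intro x
    unfold Qpoly
    exact continuous_finset_sum _ fun i _ => continuous_finset_sum _ fun j _ => by fun_prop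
  have hQcont : Continuous (Function.uncurry fun x y => (Qpoly r c x y)^2) := by
    apply Continuous.pow
    have : Continuous fun p : ℝ × ℝ => Qpoly r c p.1 p.2 := by
      unfold Qpoly
      exact continuous_finset_sum _ fun i _ => continuous_finset_sum _ fun j _ => by fun_prop
    exact this
  set S : ℝ → ℝ := fun y => ∑ j ∈ Finset.range (r+1), (g j y)^2 with hS
  have hScont : Continuous S := by
    rw [hS]; exact continuous_finset_sum _ fun j _ => ((hcont j).pow 2)
  have hpt : ∀ x ∈ Set.Icc (0:ℝ) 1, ∀ y : ℝ, (Qpoly r c x y)^2 ≤ ((r:ℝ)+1) * S y := by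
    intro x hx y
    rw [← Pc_eval]
    have h := taylor_sq_bound r (Pc r c y) (Pc_natDegree r c y) hx.1 hx.2
    simpa [hS, hg] using h
  have int_inner : ∀ x : ℝ,
      IntervalIntegrable (fun y => (Qpoly r c x y)^2) MeasureTheory.volume 0 1 :=
    fun x => ((hQy x).pow 2).intervalIntegrable _ _
  have int_S : IntervalIntegrable (fun y => ((r:ℝ)+1) * S y) MeasureTheory.volume 0 1 :=
    (continuous_const.mul hScont).intervalIntegrable _ _
  have step1 : ∀ x ∈ Set.Icc (0:ℝ) 1,
      (∫ y in (0:ℝ)..1, (Qpoly r c x y)^2) ≤ ∫ y in (0:ℝ)..1, ((r:ℝ)+1) * S y :=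
    fun x hx =>
      intervalIntegral.integral_mono_on zero_le_one (int_inner x) int_S fun y _ => hpt x hx y
  have contF : Continuous fun x => ∫ y in (0:ℝ)..1, (Qpoly r c x y)^2 :=
    intervalIntegral.continuous_parametric_intervalIntegral_of_continuous'
      (μ := MeasureTheory.volume) (f := fun x y => (Qpoly r c x y)^2) hQcont 0 1
  have step2 : (∫ x in (0:ℝ)..1, ∫ y in (0:ℝ)..1, (Qpoly r c x y)^2)
      ≤ ∫ y in (0:ℝ)..1, ((r:ℝ)+1) * S y := by
    have h := intervalIntegral.integral_mono_on zero_le_one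
      (contF.intervalIntegrable (μ := MeasureTheory.volume) 0 1) intervalIntegrable_const step1
    simpa using h
  have int_gsq : ∀ j, IntervalIntegrable (fun y => (g j y)^2) MeasureTheory.volume 0 1 :=
    fun j => ((hcont j).pow 2).intervalIntegrable _ _
  have hsplit : Finset.range (r+1) = insert 0 (Finset.Icc 1 r) := by
    ext a; simp only [Finset.mem_range, Finset.mem_insert, Finset.mem_Icc]; omega
  have hM : (∫ y in (0:ℝ)..1, ((r:ℝ)+1) * S y)
      = ((r:ℝ)+1) * ((∫ y in (0:ℝ)..1, (Qpoly r c 1 y)^2) +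
          ∑ j ∈ Finset.Icc 1 r, (1 / (Nat.factorial j : ℝ)^2) *
            ∫ y in (0:ℝ)..1, (iteratedDeriv j (fun x => Qpoly r c x y) 1)^2) := by
    rw [intervalIntegral.integral_const_mul]
    congr 1
    simp only [hS]
    rw [intervalIntegral.integral_finset_sum (fun j _ => int_gsq j), hsplit,
        Finset.sum_insert (by simp)]
    congr 1
    · refine intervalIntegral.integral_congr fun y _ => ?_
      simp [hg, Pc_eval]
    · refine Finset.sum_congr rfl fun j hj => ?_
      have hid : ∀ y : ℝ, iteratedDeriv j (fun x => Qpoly r c x y) 1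
          = (Polynomial.derivative^[j] (Pc r c y)).eval 1 := by
        intro y
        have h1 : (fun x => Qpoly r c x y) = fun x => (Pc r c y).eval x :=
          funext fun x => (Pc_eval r c y x).symm
        rw [h1, iteratedDeriv_polyeval]
      rw [← intervalIntegral.integral_const_mul]
      refine intervalIntegral.integral_congr fun y _ => ?_
      rw [hid y]
      simp only [hg]
      rw [div_pow]
      ring
  exact step2.trans (le_of_eq hM)
end
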